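/- arXiv:2010.06383 — 7 statements merged into one kernel-verified Lean document; each statement's English description precedes it below -/
import Mathlib

section
/- Let H and A be n×n complex matrices (n ≥ 1). The map t ↦ exp(H + t·A) (matrix exponential) is differentiable at t = 0 with derivative equal to ∫₀¹ exp(u·H) · A · exp((1−u)·H) du. -/
open MeasureTheory
open scoped ComplexOrder

attribute [local instance] Matrix.frobeniusNormedAddCommGroup Matrix.frobeniusNormedSpace

variable {n : ℕ}

/-- The matrix exponential. -/
noncomputable def mexp (A : Matrix (Fin n) (Fin n) ℂ) : Matrix (Fin n) (Fin n) ℂ :=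
  NormedSpace.exp A

/-- The matrix logarithm, defined by (real) functional calculus; meaningful on
positive definite matrices. -/
noncomputable def mlog (A : Matrix (Fin n) (Fin n) ℂ) : Matrix (Fin n) (Fin n) ℂ :=
  cfc Real.log A

/-- Real powers of a matrix, defined by (real) functional calculus; meaningful on
positive definite matrices. -/
noncomputable def mpow (A : Matrix (Fin n) (Fin n) ℂ) (u : ℝ) : Matrix (Fin n) (Fin n) ℂ :=
  cfc (fun x : ℝ => x ^ u) A

/-- Umegaki's relative entropy `D(ρ‖σ) = Tr ρ (log ρ - log σ)` (a real number). -/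
noncomputable def relEnt (ρ σ : Matrix (Fin n) (Fin n) ℂ) : ℝ :=
  (Matrix.trace (ρ * (mlog ρ - mlog σ))).re

/-- The Kubo transform `[A]^K_ρ = ∫₀¹ ρ^u A ρ^(1-u) du` (entrywise Bochner integral). -/
noncomputable def kubo (ρ A : Matrix (Fin n) (Fin n) ℂ) : Matrix (Fin n) (Fin n) ℂ :=
  ∫ u in (0:ℝ)..1, mpow ρ u * A * mpow ρ (1 - u)

/-- The chart centered at `ρ`: `c_ρ(σ) = log σ - log ρ + D(ρ‖σ)·I`. -/
noncomputable def chart (ρ σ : Matrix (Fin n) (Fin n) ℂ) : Matrix (Fin n) (Fin n) ℂ :=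
  mlog σ - mlog ρ + relEnt ρ σ • (1 : Matrix (Fin n) (Fin n) ℂ)

/-- The normalization `α(t) = log Tr exp((1-t)·log ρ + t·log σ)` of the exponential arc. -/
noncomputable def alpha (ρ σ : Matrix (Fin n) (Fin n) ℂ) (t : ℝ) : ℝ :=
  Real.log (Matrix.trace (mexp ((1 - t) • mlog ρ + t • mlog σ))).re

/-- The exponential arc connecting `σ` to `ρ`:
`σ_t = exp((1-t)·log ρ + t·log σ - α(t)·I)`. -/
noncomputable def arc (ρ σ : Matrix (Fin n) (Fin n) ℂ) (t : ℝ) : Matrix (Fin n) (Fin n) ℂ :=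
  mexp ((1 - t) • mlog ρ + t • mlog σ - alpha ρ σ t • (1 : Matrix (Fin n) (Fin n) ℂ))

/-- The potential `Φ_ρ(A) = log Tr exp(log ρ + A)`. -/
noncomputable def potential (ρ A : Matrix (Fin n) (Fin n) ℂ) : ℝ :=
  Real.log (Matrix.trace (mexp (mlog ρ + A))).re

/-- The density matrix `τ_A = exp(log ρ + A) / Tr exp(log ρ + A)`. -/
noncomputable def tauOf (ρ A : Matrix (Fin n) (Fin n) ℂ) : Matrix (Fin n) (Fin n) ℂ :=
  (Matrix.trace (mexp (mlog ρ + A)))⁻¹ • mexp (mlog ρ + A)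

/-!
Duhamel's formula: differentiating `s ↦ exp (s • X) * exp ((1 - s) • Y)` and integrating over
`[0, 1]` gives `exp X - exp Y = ∫₀¹ exp (s • X) * (X - Y) * exp ((1 - s) • Y) ds`. With
`X = H + t • A` and `Y = H` the difference quotient of `t ↦ exp (H + t • A)` at `0` is therefore
`∫₀¹ exp (s • (H + t • A)) * A * exp ((1 - s) • H) ds`, which is continuous in `t`.
-/

open NormedSpace

theorem hasDerivAt_of_sub_eq_smul {𝕜 E : Type*} [NontriviallyNormedField 𝕜]
    [NormedAddCommGroup E] [NormedSpace 𝕜 E] {f g : 𝕜 → E} {x : 𝕜}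
    (hfg : ∀ t, f t - f x = (t - x) • g t) (hg : ContinuousAt g x) :
    HasDerivAt f (g x) x := by
  refine hasDerivAt_iff_tendsto_slope.mpr <|
    (hg.tendsto.mono_left nhdsWithin_le_nhds).congr' <|
      eventually_nhdsWithin_of_forall fun t ht => ?_
  rw [slope_def_module, hfg, smul_smul, inv_mul_cancel₀ (sub_ne_zero.2 ht), one_smul]

section Duhamel

variable {𝔸 : Type*} [NormedRing 𝔸] [NormedAlgebra ℝ 𝔸] [CompleteSpace 𝔸]

-- `exp` is defined through a chosen `ℚ`-algebra structure, so any one will do here.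
@[fun_prop]
theorem continuous_exp_of_normedAlgebra_real : Continuous (exp : 𝔸 → 𝔸) :=
  letI := NormedAlgebra.restrictScalars ℚ ℝ 𝔸
  exp_continuous

theorem hasDerivAt_exp_smul_mul_exp_one_sub_smul (X Y : 𝔸) (s : ℝ) :
    HasDerivAt (fun s : ℝ => exp (s • X) * exp ((1 - s) • Y))
      (exp (s • X) * (X - Y) * exp ((1 - s) • Y)) s := by
  have hY : HasDerivAt (fun s : ℝ => exp ((1 - s) • Y)) ((-1 : ℝ) • (Y * exp ((1 - s) • Y))) s :=
    (hasDerivAt_exp_smul_const' Y (1 - s)).scomp s ((hasDerivAt_id s).const_sub 1)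
  refine ((hasDerivAt_exp_smul_const X s).mul hY).congr_deriv ?_
  simp only [neg_one_smul, mul_neg]
  noncomm_ring

theorem exp_sub_exp_eq_integral (X Y : 𝔸) :
    exp X - exp Y = ∫ s in (0 : ℝ)..1, exp (s • X) * (X - Y) * exp ((1 - s) • Y) := by
  rw [intervalIntegral.integral_eq_sub_of_hasDerivAt
    (fun s _ => hasDerivAt_exp_smul_mul_exp_one_sub_smul X Y s)
    (Continuous.intervalIntegrable (by fun_prop) 0 1)]
  simp only [one_smul, sub_self, zero_smul, exp_zero, mul_one, sub_zero, one_mul]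

theorem hasDerivAt_exp_add_smul (H A : 𝔸) :
    HasDerivAt (fun t : ℝ => exp (H + t • A))
      (∫ s in (0 : ℝ)..1, exp (s • H) * A * exp ((1 - s) • H)) 0 := by
  set g : ℝ → 𝔸 := fun t => ∫ s in (0 : ℝ)..1, exp (s • (H + t • A)) * A * exp ((1 - s) • H)
  have hg : Continuous g :=
    intervalIntegral.continuous_parametric_intervalIntegral_of_continuous' (by fun_prop) 0 1
  have hdiff : ∀ t : ℝ, exp (H + t • A) - exp (H + (0 : ℝ) • A) = (t - 0) • g t := fun t => by
    rw [zero_smul, add_zero, sub_zero, exp_sub_exp_eq_integral, add_sub_cancel_left,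
      ← intervalIntegral.integral_smul]
    simp only [smul_mul_assoc, mul_smul_comm]
  simpa [g] using hasDerivAt_of_sub_eq_smul hdiff hg.continuousAt

end Duhamel

attribute [local instance] Matrix.frobeniusNormedRing Matrix.frobeniusNormedAlgebra

theorem stmt0_general (n : ℕ) (H A : Matrix (Fin n) (Fin n) ℂ) :
    HasDerivAt (fun t : ℝ => mexp (H + t • A))
      (∫ u in (0:ℝ)..1, mexp (u • H) * A * mexp ((1 - u) • H)) 0 :=
  hasDerivAt_exp_add_smul H A

/-- the map `t ↦ exp(H + t·A)` is differentiable at `t = 0` with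
derivative `∫₀¹ exp(u·H)·A·exp((1-u)·H) du`. -/
theorem stmt0 (n : ℕ) (hn : 1 ≤ n) (H A : Matrix (Fin n) (Fin n) ℂ) :
    HasDerivAt (fun t : ℝ => mexp (H + t • A))
      (∫ u in (0:ℝ)..1, mexp (u • H) * A * mexp ((1 - u) • H)) 0 :=
  stmt0_general n H A
end

section
/- Let ρ and σ be non-degenerate density matrices. The real-valued function α(t) = log Tr exp((1−t)·log ρ + t·log σ) is differentiable at t = 0 with derivative α′(0) = −D(ρ||σ). -/
open MeasureTheory
open scoped ComplexOrder

attribute [local instance] Matrix.frobeniusNormedAddCommGroup Matrix.frobeniusNormedSpace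

variable {n : ℕ}

/-!
Since `exp (log ρ) = ρ` has trace `1`, `α = log ∘ f` with `f t = Tr exp (log ρ + t (log σ - log ρ))`
and `f 0 = 1`. Differentiating the exponential series termwise, cyclicity of the trace collapses
the derivative of `Tr (A + t B) ^ (k + 1)` to `(k + 1) Tr ((A + t B) ^ k B)`, so
`f' 0 = Tr (exp (log ρ) (log σ - log ρ)) = Tr ρ (log σ - log ρ) = -D(ρ‖σ)`.
This only uses that the trace is a continuous linear functional `τ` with `τ (x y) = τ (y x)`.
-/

open scoped Nat

section Tracial

variable {𝔸 E : Type*} [NormedRing 𝔸]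

theorem norm_pow_mul_le_pow_mul (x b : 𝔸) (k : ℕ) : ‖x ^ k * b‖ ≤ ‖x‖ ^ k * ‖b‖ := by
  rcases k.eq_zero_or_pos with rfl | hk
  · simp
  · exact (norm_mul_le _ _).trans (by gcongr; exact norm_pow_le' x hk)

variable [NormedAlgebra ℝ 𝔸] [NormedAddCommGroup E] [NormedSpace ℝ E]

theorem ContinuousLinearMap.norm_inv_factorial_smul_apply_pow_mul_le (τ : 𝔸 →L[ℝ] E)
    (x b : 𝔸) (k : ℕ) : ‖(k !⁻¹ : ℝ) • τ (x ^ k * b)‖ ≤ ‖τ‖ * ‖b‖ * (‖x‖ ^ k / k !) := by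
  rw [norm_smul, Real.norm_of_nonneg (by positivity)]
  calc (k !⁻¹ : ℝ) * ‖τ (x ^ k * b)‖ ≤ (k !⁻¹ : ℝ) * (‖τ‖ * (‖x‖ ^ k * ‖b‖)) := by
        gcongr
        exact (τ.le_opNorm _).trans (by gcongr; exact norm_pow_mul_le_pow_mul x b k)
    _ = ‖τ‖ * ‖b‖ * (‖x‖ ^ k / k !) := by ring

theorem ContinuousLinearMap.hasSum_apply_exp_mul [CompleteSpace 𝔸] (τ : 𝔸 →L[ℝ] E) (x b : 𝔸) :
    HasSum (fun k : ℕ => (k !⁻¹ : ℝ) • τ (x ^ k * b)) (τ (NormedSpace.exp x * b)) := by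
  have hexp := (NormedSpace.expSeries_summable' (𝕂 := ℝ) x).hasSum
  rw [← congrFun (NormedSpace.exp_eq_tsum ℝ) x] at hexp
  simpa [smul_mul_assoc] using (hexp.mul_right b).mapL τ

variable {τ : 𝔸 →L[ℝ] E}

theorem hasDerivAt_tracial_pow_succ_add_smul (hτ : ∀ x y, τ (x * y) = τ (y * x)) (a b : 𝔸)
    (k : ℕ) (t : ℝ) :
    HasDerivAt (fun s : ℝ => τ ((a + s • b) ^ (k + 1))) ((k + 1 : ℝ) • τ ((a + t • b) ^ k * b))
      t := by
  have hline : HasDerivAt (fun s : ℝ => a + s • b) b t := by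
    simpa using ((hasDerivAt_id t).smul_const b).const_add a
  have hcyc : ∀ i ∈ Finset.range (k + 1),
      τ ((a + t • b) ^ (k - i) * b * (a + t • b) ^ i) = τ ((a + t • b) ^ k * b) := by
    intro i hi
    rw [hτ, ← mul_assoc, ← pow_add, Nat.add_sub_cancel' (Finset.mem_range_succ_iff.mp hi)]
  have := τ.hasFDerivAt.comp_hasDerivAt t (hline.fun_pow' (k + 1))
  simp only [Function.comp_def, map_sum, Nat.pred_eq_sub_one, Nat.add_sub_cancel] at this
  rwa [Finset.sum_congr rfl hcyc, Finset.sum_const, Finset.card_range,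
    ← Nat.cast_smul_eq_nsmul ℝ, Nat.cast_succ] at this

theorem hasDerivAt_tracial_exp_add_smul [CompleteSpace 𝔸] [CompleteSpace E]
    (hτ : ∀ x y, τ (x * y) = τ (y * x)) (a b : 𝔸) :
    HasDerivAt (fun t : ℝ => τ (NormedSpace.exp (a + t • b))) (τ (NormedSpace.exp a * b)) 0 := by
  have hexp : ∀ x : 𝔸, τ (NormedSpace.exp x) =
      τ 1 + ∑' k : ℕ, ((k + 1)!⁻¹ : ℝ) • τ (x ^ (k + 1)) := fun x => by
    have hsum := τ.hasSum_apply_exp_mul x 1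
    rw [← mul_one (NormedSpace.exp x), ← hsum.tsum_eq, hsum.summable.tsum_eq_zero_add]
    simp
  have hterm : ∀ (k : ℕ) (t : ℝ),
      HasDerivAt (fun s : ℝ => ((k + 1)!⁻¹ : ℝ) • τ ((a + s • b) ^ (k + 1)))
        ((k !⁻¹ : ℝ) • τ ((a + t • b) ^ k * b)) t := by
    intro k t
    refine ((hasDerivAt_tracial_pow_succ_add_smul hτ a b k t).const_smul
      ((k + 1)!⁻¹ : ℝ)).congr_deriv ?_
    rw [smul_smul, Nat.factorial_succ]
    push_cast
    field_simp
  set r := ‖a‖ + ‖b‖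
  have hbound : ∀ k, ∀ t ∈ Metric.ball (0 : ℝ) 1,
      ‖(k !⁻¹ : ℝ) • τ ((a + t • b) ^ k * b)‖ ≤ ‖τ‖ * ‖b‖ * (r ^ k / k !) := by
    intro k t ht
    have ht1 : |t| ≤ 1 := (mem_ball_zero_iff.mp ht).le
    have hnorm : ‖a + t • b‖ ≤ r := calc
      ‖a + t • b‖ ≤ ‖a‖ + |t| * ‖b‖ := by simpa [norm_smul] using norm_add_le a (t • b)
      _ ≤ r := by nlinarith [norm_nonneg b]
    exact (τ.norm_inv_factorial_smul_apply_pow_mul_le _ b k).trans (by gcongr)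
  have hderiv := hasDerivAt_tsum_of_isPreconnected
    ((Real.summable_pow_div_factorial r).mul_left _) Metric.isOpen_ball
    (convex_ball (0 : ℝ) 1).isPreconnected (fun k t _ => hterm k t) hbound
    (Metric.mem_ball_self one_pos) ?_ (Metric.mem_ball_self one_pos)
  · simp only [hexp, zero_smul, add_zero, (τ.hasSum_apply_exp_mul a b).tsum_eq] at hderiv ⊢
    exact hderiv.const_add (τ 1)
  · simpa using
      (summable_nat_add_iff 1).mpr (τ.hasSum_apply_exp_mul (a + (0 : ℝ) • b) 1).summable

end Tracial

attribute [local instance] Matrix.frobeniusNormedRing Matrix.frobeniusNormedAlgebra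

theorem Matrix.hasDerivAt_re_trace_exp_add_smul {m : Type*} [Fintype m] [DecidableEq m]
    (A B : Matrix m m ℂ) :
    HasDerivAt (fun t : ℝ => (NormedSpace.exp (A + t • B)).trace.re)
      (NormedSpace.exp A * B).trace.re 0 :=
  hasDerivAt_tracial_exp_add_smul
    (τ := { toLinearMap := Complex.reLm.comp ((traceLinearMap m ℂ ℂ).restrictScalars ℝ)
            cont := LinearMap.continuous_of_finiteDimensional _ })
    (fun X Y => by simp [trace_mul_comm X Y]) A B

theorem exp_mlog {n : ℕ} {ρ : Matrix (Fin n) (Fin n) ℂ} (hρ : ρ.PosDef) :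
    NormedSpace.exp (mlog ρ) = ρ := by
  -- `CFC.exp_log` needs the C⋆-algebra norm; `NormedSpace.exp` only sees the (common) topology.
  let _ : NormedRing (Matrix (Fin n) (Fin n) ℂ) := Matrix.instL2OpNormedRing
  let _ : NormedAlgebra ℂ (Matrix (Fin n) (Fin n) ℂ) := Matrix.instL2OpNormedAlgebra
  open scoped MatrixOrder in exact CFC.exp_log ρ hρ.isStrictlyPositive

theorem alpha_eq_log_re_trace_exp {n : ℕ} (ρ σ : Matrix (Fin n) (Fin n) ℂ) :
    alpha ρ σ = fun t : ℝ =>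
      Real.log (NormedSpace.exp (mlog ρ + t • (mlog σ - mlog ρ))).trace.re := by
  funext t
  rw [alpha, mexp]
  congr 4
  module

theorem stmt2_general (n : ℕ) (ρ σ : Matrix (Fin n) (Fin n) ℂ)
    (hρ : ρ.PosDef) (hρ1 : ρ.trace = 1) :
    HasDerivAt (alpha ρ σ) (-relEnt ρ σ) 0 := by
  have hderiv := Matrix.hasDerivAt_re_trace_exp_add_smul (mlog ρ) (mlog σ - mlog ρ)
  rw [exp_mlog hρ] at hderiv
  have hlog := hderiv.log (by simp [exp_mlog hρ, hρ1])
  rw [alpha_eq_log_re_trace_exp]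
  convert hlog using 1
  simp [relEnt, exp_mlog hρ, hρ1, Matrix.mul_sub]

/-- `α` is differentiable at `t = 0` with `α'(0) = -D(ρ‖σ)`. -/
theorem stmt2 (n : ℕ) (hn : 1 ≤ n) (ρ σ : Matrix (Fin n) (Fin n) ℂ)
    (hρ : ρ.PosDef) (hρ1 : ρ.trace = 1) (hσ : σ.PosDef) (hσ1 : σ.trace = 1) :
    HasDerivAt (alpha ρ σ) (-relEnt ρ σ) 0 :=
  stmt2_general n ρ σ hρ hρ1
end

section
/- Let ρ be a positive definite n×n complex matrix. For every n×n complex matrix V there exists an n×n complex matrix A such that V = [A]^K_ρ. If V is Hermitian then A can be chosen Hermitian, and if in addition Tr V = 0 then this A satisfies Tr ρA = 0. -/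
/-!
The Kubo transform `A ↦ [A]^K_ρ` is a linear endomorphism of a finite-dimensional space, and it
is positive for the trace pairing: writing `ρ^u = ρ^(u/2) ρ^(u/2)`, one gets
`Tr (Aᴴ [A]^K_ρ) = ∫₀¹ Tr (Bᵤᴴ Bᵤ) du` with `Bᵤ = ρ^(u/2) A ρ^((1-u)/2)`, which is nonzero as
soon as `A` is, because the powers of `ρ` are invertible. So the transform is injective, hence
bijective. The substitution `u ↦ 1 - u` shows that it commutes with `ᴴ`, so by injectivity the
preimage of a Hermitian matrix is Hermitian; and cyclicity of the trace gives
`Tr [A]^K_ρ = Tr (ρ A)`.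
-/

open MeasureTheory
open scoped ComplexOrder

attribute [local instance] Matrix.frobeniusNormedAddCommGroup Matrix.frobeniusNormedSpace

variable {n : ℕ}

open scoped Matrix MatrixOrder

section MatrixPower

variable {ρ : Matrix (Fin n) (Fin n) ℂ}

lemma continuousOn_rpow_spectrum (hρ : ρ.PosDef) (u : ℝ) :
    ContinuousOn (fun x : ℝ => x ^ u) (spectrum ℝ ρ) := fun x hx =>
  (Real.continuousAt_rpow_const x u
    (Or.inl (hρ.isStrictlyPositive.spectrum_pos hx).ne')).continuousWithinAt

lemma mpow_mul_mpow (hρ : ρ.PosDef) (a b : ℝ) : mpow ρ a * mpow ρ b = mpow ρ (a + b) := by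
  rw [mpow, mpow, mpow, ← cfc_mul _ _ ρ (continuousOn_rpow_spectrum hρ a)
    (continuousOn_rpow_spectrum hρ b)]
  exact cfc_congr fun x hx => (Real.rpow_add (hρ.isStrictlyPositive.spectrum_pos hx) a b).symm

lemma mpow_zero (hρ : ρ.PosDef) : mpow ρ 0 = 1 :=
  (cfc_congr fun x _ => Real.rpow_zero x).trans (cfc_const_one ℝ ρ hρ.1)

lemma mpow_one (hρ : ρ.PosDef) : mpow ρ 1 = ρ :=
  (cfc_congr fun x _ => Real.rpow_one x).trans (cfc_id ℝ ρ hρ.1)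

lemma isUnit_mpow (hρ : ρ.PosDef) (u : ℝ) : IsUnit (mpow ρ u) :=
  .of_mul_eq_one (mpow ρ (-u)) (by rw [mpow_mul_mpow hρ, add_neg_cancel, mpow_zero hρ])

lemma conjTranspose_mpow (u : ℝ) : (mpow ρ u)ᴴ = mpow ρ u :=
  cfc_predicate (fun x : ℝ => x ^ u) ρ

lemma continuous_mpow (hρ : ρ.PosDef) : Continuous fun u : ℝ => mpow ρ u := by
  simp only [mpow, hρ.1.cfc_eq, Matrix.IsHermitian.cfc, Unitary.conjStarAlgAut_apply]
  refine (continuous_const.matrix_mul (Continuous.matrix_diagonal ?_)).matrix_mul continuous_const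
  refine continuous_pi fun i => Complex.continuous_ofReal.comp ?_
  exact continuous_const.rpow continuous_id fun _ => Or.inl (hρ.eigenvalues_pos i).ne'

end MatrixPower

section MatrixIntegral

variable {ι : Type*} [Fintype ι] {f : ℝ → Matrix ι ι ℂ} {a b : ℝ}

lemma trace_intervalIntegral (hf : Continuous f) :
    (∫ u in a..b, f u).trace = ∫ u in a..b, (f u).trace :=
  ((Matrix.traceLinearMap ι ℂ ℂ).toContinuousLinearMap.intervalIntegral_comp_comm
    (hf.intervalIntegrable a b)).symm

lemma conjTranspose_intervalIntegral (hf : Continuous f) :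
    (∫ u in a..b, f u)ᴴ = ∫ u in a..b, (f u)ᴴ :=
  ((starL' ℝ : Matrix ι ι ℂ ≃L[ℝ] _).toContinuousLinearMap.intervalIntegral_comp_comm
    (hf.intervalIntegrable a b)).symm

lemma mul_intervalIntegral [DecidableEq ι] (B : Matrix ι ι ℂ) (hf : Continuous f) :
    B * ∫ u in a..b, f u = ∫ u in a..b, B * f u :=
  ((LinearMap.mulLeft ℂ B).toContinuousLinearMap.intervalIntegral_comp_comm
    (hf.intervalIntegrable a b)).symm

end MatrixIntegral

lemma re_trace_conjTranspose_mul_self_pos {ι κ : Type*} [Fintype ι] [Fintype κ]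
    {B : Matrix ι κ ℂ} (hB : B ≠ 0) : 0 < (Bᴴ * B).trace.re :=
  (Complex.pos_iff.mp <| (Matrix.posSemidef_conjTranspose_mul_self B).trace_nonneg.lt_of_ne
    (Ne.symm <| Matrix.trace_conjTranspose_mul_self_eq_zero_iff.not.mpr hB)).1

lemma re_trace_conjTranspose_mul_sandwich_pos {ι : Type*} [Fintype ι] [DecidableEq ι]
    {S T A : Matrix ι ι ℂ} (hS : Sᴴ = S) (hT : Tᴴ = T) (hSu : IsUnit S) (hTu : IsUnit T)
    (hA : A ≠ 0) : 0 < (Aᴴ * (S * S * A * (T * T))).trace.re := by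
  have hB : S * A * T ≠ 0 := by
    rwa [Ne, hTu.mul_left_eq_zero, hSu.mul_right_eq_zero]
  have htrace : (Aᴴ * (S * S * A * (T * T))).trace = ((S * A * T)ᴴ * (S * A * T)).trace := by
    rw [show Aᴴ * (S * S * A * (T * T)) = Aᴴ * (S * S * A * T) * T by simp only [mul_assoc],
      Matrix.trace_mul_comm, Matrix.conjTranspose_mul, Matrix.conjTranspose_mul, hS, hT]
    simp only [mul_assoc]
  exact htrace ▸ re_trace_conjTranspose_mul_self_pos hB

section Kubo

variable {ρ : Matrix (Fin n) (Fin n) ℂ}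

lemma continuous_kubo_integrand (hρ : ρ.PosDef) (A : Matrix (Fin n) (Fin n) ℂ) :
    Continuous fun u : ℝ => mpow ρ u * A * mpow ρ (1 - u) :=
  ((continuous_mpow hρ).matrix_mul continuous_const).matrix_mul
    ((continuous_mpow hρ).comp (continuous_const.sub continuous_id))

noncomputable def kuboLinearMap (hρ : ρ.PosDef) :
    Matrix (Fin n) (Fin n) ℂ →ₗ[ℂ] Matrix (Fin n) (Fin n) ℂ where
  toFun := kubo ρ
  map_add' A B := by
    simp only [kubo, mul_add, add_mul]
    exact intervalIntegral.integral_add ((continuous_kubo_integrand hρ A).intervalIntegrable 0 1)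
      ((continuous_kubo_integrand hρ B).intervalIntegrable 0 1)
  map_smul' c A := by
    simp only [kubo, Matrix.mul_smul, Matrix.smul_mul, RingHom.id_apply]
    exact intervalIntegral.integral_smul c _

lemma trace_kubo (hρ : ρ.PosDef) (A : Matrix (Fin n) (Fin n) ℂ) :
    (kubo ρ A).trace = (ρ * A).trace := by
  have hcyc (u : ℝ) : (mpow ρ u * A * mpow ρ (1 - u)).trace = (ρ * A).trace := by
    rw [Matrix.trace_mul_comm, ← mul_assoc, mpow_mul_mpow hρ, sub_add_cancel, mpow_one hρ]
  simp [kubo, trace_intervalIntegral (continuous_kubo_integrand hρ A), hcyc]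

lemma conjTranspose_kubo (hρ : ρ.PosDef) (A : Matrix (Fin n) (Fin n) ℂ) :
    (kubo ρ A)ᴴ = kubo ρ Aᴴ := by
  have hflip (u : ℝ) : (mpow ρ u * A * mpow ρ (1 - u))ᴴ
      = mpow ρ (1 - u) * Aᴴ * mpow ρ (1 - (1 - u)) := by
    rw [Matrix.conjTranspose_mul, Matrix.conjTranspose_mul, conjTranspose_mpow,
      conjTranspose_mpow, sub_sub_cancel, mul_assoc]
  rw [kubo, conjTranspose_intervalIntegral (continuous_kubo_integrand hρ A)]
  simp only [hflip]
  rw [intervalIntegral.integral_comp_sub_left (fun v => mpow ρ v * Aᴴ * mpow ρ (1 - v)) 1]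
  norm_num [kubo]

lemma re_trace_conjTranspose_mul_kubo_pos (hρ : ρ.PosDef) {A : Matrix (Fin n) (Fin n) ℂ}
    (hA : A ≠ 0) : 0 < (Aᴴ * kubo ρ A).trace.re := by
  have hcont : Continuous fun u : ℝ => Aᴴ * (mpow ρ u * A * mpow ρ (1 - u)) :=
    continuous_const.matrix_mul (continuous_kubo_integrand hρ A)
  have hre := Complex.reCLM.intervalIntegral_comp_comm
    (hcont.matrix_trace.intervalIntegrable (μ := volume) 0 1)
  simp only [Complex.reCLM_apply] at hre
  rw [kubo, mul_intervalIntegral _ (continuous_kubo_integrand hρ A), trace_intervalIntegral hcont,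
    ← hre]
  refine intervalIntegral.intervalIntegral_pos_of_pos_on
    ((Complex.continuous_re.comp hcont.matrix_trace).intervalIntegrable 0 1) (fun u _ => ?_)
    zero_lt_one
  rw [← add_halves u, ← mpow_mul_mpow hρ, ← add_halves (1 - (u / 2 + u / 2)),
    ← mpow_mul_mpow hρ]
  exact re_trace_conjTranspose_mul_sandwich_pos (conjTranspose_mpow _) (conjTranspose_mpow _)
    (isUnit_mpow hρ _) (isUnit_mpow hρ _) hA

lemma kubo_injective (hρ : ρ.PosDef) : Function.Injective (kubo ρ) := by
  refine (injective_iff_map_eq_zero (kuboLinearMap hρ)).mpr fun A hA => ?_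
  by_contra hA0
  have hpos := re_trace_conjTranspose_mul_kubo_pos hρ hA0
  rw [show kubo ρ A = 0 from hA, Matrix.mul_zero, Matrix.trace_zero, Complex.zero_re] at hpos
  exact hpos.false

lemma kubo_surjective (hρ : ρ.PosDef) : Function.Surjective (kubo ρ) :=
  (LinearMap.injective_iff_surjective (f := kuboLinearMap hρ)).mp (kubo_injective hρ)

end Kubo

theorem stmt4_general (n : ℕ) (ρ : Matrix (Fin n) (Fin n) ℂ) (hρ : ρ.PosDef) :
    (∀ V : Matrix (Fin n) (Fin n) ℂ, ∃ A, V = kubo ρ A) ∧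
    (∀ V : Matrix (Fin n) (Fin n) ℂ, V.IsHermitian →
      ∃ A, V = kubo ρ A ∧ A.IsHermitian ∧ (V.trace = 0 → (ρ * A).trace = 0)) := by
  refine ⟨fun V => (kubo_surjective hρ V).imp fun _ h => h.symm, fun V hV => ?_⟩
  obtain ⟨A, rfl⟩ := kubo_surjective hρ V
  refine ⟨A, rfl, kubo_injective hρ ?_, fun h => trace_kubo hρ A ▸ h⟩
  rw [← conjTranspose_kubo hρ, hV]

/-- every matrix `V` is the Kubo transform of some `A`; if `V` is Hermitian
then `A` can be chosen Hermitian, and if in addition `Tr V = 0` then `Tr ρA = 0`. -/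
theorem stmt4 (n : ℕ) (hn : 1 ≤ n) (ρ : Matrix (Fin n) (Fin n) ℂ) (hρ : ρ.PosDef) :
    (∀ V : Matrix (Fin n) (Fin n) ℂ, ∃ A, V = kubo ρ A) ∧
    (∀ V : Matrix (Fin n) (Fin n) ℂ, V.IsHermitian →
      ∃ A, V = kubo ρ A ∧ A.IsHermitian ∧ (V.trace = 0 → (ρ * A).trace = 0)) :=
  stmt4_general n ρ hρ
end

section
/- Let ρ be a non-degenerate density matrix. The map σ ↦ c_ρ(σ) is a bijection from the set of non-degenerate density matrices onto the set of Hermitian n×n matrices A satisfying Tr ρA = 0; the inverse sends A to exp(log ρ + A) / Tr exp(log ρ + A). -/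
open MeasureTheory
open scoped ComplexOrder

attribute [local instance] Matrix.frobeniusNormedAddCommGroup Matrix.frobeniusNormedSpace

variable {n : ℕ}

/-!
On Hermitian matrices `mexp` and `mlog` are mutually inverse, and `exp (X + c I) = e^c exp X`.
Since `log ρ + c_ρ(σ) = log σ + D(ρ‖σ) I`, normalising its exponential returns `σ`. Conversely
`τ_A = exp (log ρ + A - Φ_ρ(A) I)`, so `c_ρ(τ_A) = A + (D(ρ‖τ_A) - Φ_ρ(A)) I`, and
`Tr ρ = 1`, `Tr ρA = 0` give `D(ρ‖τ_A) = Tr ρ (Φ_ρ(A) I - A) = Φ_ρ(A)`.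
-/

open scoped MatrixOrder

attribute [local instance] Matrix.frobeniusNormedRing Matrix.frobeniusNormedAlgebra

lemma Matrix.IsHermitian.ofReal_re_trace_mul {m : Type*} [Fintype m] {P Q : Matrix m m ℂ}
    (hP : P.IsHermitian) (hQ : Q.IsHermitian) : (((P * Q).trace.re : ℝ) : ℂ) = (P * Q).trace := by
  refine Complex.conj_eq_iff_re.mp ?_
  rw [← Complex.star_def, ← Matrix.trace_conjTranspose, Matrix.conjTranspose_mul, hP.eq, hQ.eq,
    Matrix.trace_mul_comm]

lemma Matrix.isHermitian_real_smul_one {m : Type*} [DecidableEq m] (c : ℝ) :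
    (c • 1 : Matrix m m ℂ).IsHermitian :=
  (IsSelfAdjoint.all c).smul Matrix.isHermitian_one

lemma isHermitian_mlog (A : Matrix (Fin n) (Fin n) ℂ) : (mlog A).IsHermitian :=
  cfc_predicate _ A

-- The continuous functional calculus on matrices is not found by instance search through the
-- Frobenius normed-ring structure, so it is supplied explicitly.
lemma mexp_eq_cfc {A : Matrix (Fin n) (Fin n) ℂ} (hA : A.IsHermitian) :
    mexp A = cfc Real.exp A :=
  (@CFC.real_exp_eq_normedSpace_exp _ _ _ _ Matrix.IsHermitian.instContinuousFunctionalCalculus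
    A hA).symm

lemma posDef_mexp {A : Matrix (Fin n) (Fin n) ℂ} (hA : A.IsHermitian) : (mexp A).PosDef := by
  rw [← Matrix.isStrictlyPositive_iff_posDef, mexp_eq_cfc hA, cfc_isStrictlyPositive_iff _ A]
  exact fun x _ => Real.exp_pos x

lemma mexp_mlog {σ : Matrix (Fin n) (Fin n) ℂ} (hσ : σ.PosDef) : mexp (mlog σ) = σ :=
  @CFC.exp_log _ _ _ _ Matrix.IsHermitian.instContinuousFunctionalCalculus _ _ _ σ
    hσ.isStrictlyPositive

lemma mlog_mexp {A : Matrix (Fin n) (Fin n) ℂ} (hA : A.IsHermitian) : mlog (mexp A) = A :=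
  @CFC.log_exp _ _ _ _ Matrix.IsHermitian.instContinuousFunctionalCalculus A hA

lemma mexp_add_smul_one (A : Matrix (Fin n) (Fin n) ℂ) (c : ℝ) :
    mexp (A + c • (1 : Matrix (Fin n) (Fin n) ℂ)) = Real.exp c • mexp A := by
  have h := NormedSpace.exp_add_of_commute ((Commute.one_right A).smul_right c)
  rw [← Algebra.algebraMap_eq_smul_one, ← NormedSpace.algebraMap_exp_comm, ← Real.exp_eq_exp_ℝ,
    ← Algebra.commutes, ← Algebra.smul_def, Algebra.algebraMap_eq_smul_one] at h
  exact h

lemma exists_trace_mexp_eq_ofReal [Nonempty (Fin n)] {A : Matrix (Fin n) (Fin n) ℂ}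
    (hA : A.IsHermitian) : ∃ c : ℝ, 0 < c ∧ (c : ℂ) = (mexp A).trace :=
  RCLike.pos_iff_exists_ofReal.mp (posDef_mexp hA).trace_pos

lemma isHermitian_chart (ρ σ : Matrix (Fin n) (Fin n) ℂ) : (chart ρ σ).IsHermitian :=
  ((isHermitian_mlog σ).sub (isHermitian_mlog ρ)).add (Matrix.isHermitian_real_smul_one _)

section Chart

variable {ρ : Matrix (Fin n) (Fin n) ℂ}

lemma trace_mul_chart (hρ : ρ.IsHermitian) (hρ1 : ρ.trace = 1) (σ : Matrix (Fin n) (Fin n) ℂ) :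
    (ρ * chart ρ σ).trace = 0 := by
  have hD := hρ.ofReal_re_trace_mul ((isHermitian_mlog ρ).sub (isHermitian_mlog σ))
  rw [chart, relEnt, ← neg_sub, mul_add, mul_neg, Matrix.mul_smul, mul_one, Matrix.trace_add,
    Matrix.trace_neg, Matrix.trace_smul, hρ1, Complex.real_smul, mul_one, hD, neg_add_cancel]

lemma tauOf_chart {σ : Matrix (Fin n) (Fin n) ℂ} (hσ : σ.PosDef) (hσ1 : σ.trace = 1) :
    tauOf ρ (chart ρ σ) = σ := by
  have hlog : mlog ρ + chart ρ σ = mlog σ + relEnt ρ σ • 1 := by rw [chart]; abel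
  rw [tauOf, hlog, mexp_add_smul_one, mexp_mlog hσ, Matrix.trace_smul, hσ1, Complex.real_smul,
    mul_one, ← Complex.coe_smul, smul_smul,
    inv_mul_cancel₀ (Complex.ofReal_ne_zero.mpr (Real.exp_ne_zero _)), one_smul]

variable [Nonempty (Fin n)] {A : Matrix (Fin n) (Fin n) ℂ}

lemma tauOf_eq_mexp_sub_potential (hA : A.IsHermitian) :
    tauOf ρ A = mexp (mlog ρ + A - potential ρ A • 1) := by
  obtain ⟨c, hc, htr⟩ := exists_trace_mexp_eq_ofReal ((isHermitian_mlog ρ).add hA)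
  rw [tauOf, potential, ← htr, Complex.ofReal_re, sub_eq_add_neg, ← neg_smul, mexp_add_smul_one,
    Real.exp_neg, Real.exp_log hc, ← Complex.coe_smul, Complex.ofReal_inv]

lemma posDef_tauOf (hA : A.IsHermitian) : (tauOf ρ A).PosDef := by
  rw [tauOf_eq_mexp_sub_potential hA]
  exact posDef_mexp (((isHermitian_mlog ρ).add hA).sub (Matrix.isHermitian_real_smul_one _))

lemma trace_tauOf (hA : A.IsHermitian) : (tauOf ρ A).trace = 1 := by
  obtain ⟨c, hc, htr⟩ := exists_trace_mexp_eq_ofReal ((isHermitian_mlog ρ).add hA)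
  rw [tauOf, Matrix.trace_smul, ← htr, smul_eq_mul, inv_mul_cancel₀ (by exact_mod_cast hc.ne')]

lemma mlog_tauOf (hA : A.IsHermitian) : mlog (tauOf ρ A) = mlog ρ + A - potential ρ A • 1 := by
  rw [tauOf_eq_mexp_sub_potential hA,
    mlog_mexp (((isHermitian_mlog ρ).add hA).sub (Matrix.isHermitian_real_smul_one _))]

lemma relEnt_tauOf (hρ1 : ρ.trace = 1) (hA : A.IsHermitian) (hρA : (ρ * A).trace = 0) :
    relEnt ρ (tauOf ρ A) = potential ρ A := by
  rw [relEnt, mlog_tauOf hA, show mlog ρ - (mlog ρ + A - potential ρ A • 1) = potential ρ A • 1 - A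
    by abel, mul_sub, Matrix.mul_smul, mul_one, Matrix.trace_sub, Matrix.trace_smul, hρ1, hρA,
    sub_zero, Complex.real_smul, mul_one, Complex.ofReal_re]

lemma chart_tauOf (hρ1 : ρ.trace = 1) (hA : A.IsHermitian) (hρA : (ρ * A).trace = 0) :
    chart ρ (tauOf ρ A) = A := by
  rw [chart, mlog_tauOf hA, relEnt_tauOf hρ1 hA hρA]
  abel

end Chart

theorem stmt9_general (n : ℕ) (ρ : Matrix (Fin n) (Fin n) ℂ)
    (hρ : ρ.PosDef) (hρ1 : ρ.trace = 1) :
    Set.BijOn (chart ρ) {σ | σ.PosDef ∧ σ.trace = 1}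
      {A | A.IsHermitian ∧ (ρ * A).trace = 0} ∧
    Set.InvOn (tauOf ρ) (chart ρ) {σ | σ.PosDef ∧ σ.trace = 1}
      {A | A.IsHermitian ∧ (ρ * A).trace = 0} := by
  have : Nonempty (Fin n) :=
    Finset.univ_nonempty_iff.mp (Finset.nonempty_of_sum_ne_zero (hρ1 ▸ one_ne_zero))
  have hinv : Set.InvOn (tauOf ρ) (chart ρ) {σ | σ.PosDef ∧ σ.trace = 1}
      {A | A.IsHermitian ∧ (ρ * A).trace = 0} :=
    ⟨fun σ hσ => tauOf_chart hσ.1 hσ.2, fun A hA => chart_tauOf hρ1 hA.1 hA.2⟩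
  refine ⟨hinv.bijOn ?_ ?_, hinv⟩
  · exact fun σ _ => ⟨isHermitian_chart ρ σ, trace_mul_chart hρ.1 hρ1 σ⟩
  · exact fun A hA => ⟨posDef_tauOf hA.1, trace_tauOf hA.1⟩

/-- `σ ↦ c_ρ(σ)` is a bijection from the non-degenerate density matrices
onto the Hermitian matrices `A` with `Tr ρA = 0`, with inverse
`A ↦ exp(log ρ + A)/Tr exp(log ρ + A)`. -/
theorem stmt9 (n : ℕ) (hn : 1 ≤ n) (ρ : Matrix (Fin n) (Fin n) ℂ)
    (hρ : ρ.PosDef) (hρ1 : ρ.trace = 1) :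
    Set.BijOn (chart ρ) {σ | σ.PosDef ∧ σ.trace = 1}
      {A | A.IsHermitian ∧ (ρ * A).trace = 0} ∧
    Set.InvOn (tauOf ρ) (chart ρ) {σ | σ.PosDef ∧ σ.trace = 1}
      {A | A.IsHermitian ∧ (ρ * A).trace = 0} :=
  stmt9_general n ρ hρ hρ1
end

section
/- Let ρ be a positive definite n×n complex matrix and C a Hermitian n×n matrix. Then the Bogoliubov form ∫₀¹ Tr( ρ^u C ρ^{1−u} C ) du is a nonnegative real number, and it equals 0 if and only if C = 0. -/
/-! Diagonalize `ρ = U diag(λ) U*` and put `C' = U* C U`, again Hermitian. Then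
`Tr(ρ^u C ρ^(1-u) C) = ∑ i j, λᵢ^u λⱼ^(1-u) |C'ᵢⱼ|²`, so the Bogoliubov form equals
`∑ i j, L(λᵢ, λⱼ) |C'ᵢⱼ|²` with the positive weights `L(a, b) = ∫₀¹ a^u b^(1-u) du`
(the logarithmic mean). It is therefore real and nonnegative, and vanishes iff `C' = 0`. -/

open MeasureTheory
open scoped ComplexOrder

attribute [local instance] Matrix.frobeniusNormedAddCommGroup Matrix.frobeniusNormedSpace

variable {n : ℕ}

namespace Matrix

variable {m : Type*} [Fintype m] [DecidableEq m]

theorem trace_diagonal_mul_mul_diagonal_mul_of_isHermitian {A : Matrix m m ℂ}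
    (hA : A.IsHermitian) (d e : m → ℝ) :
    trace (diagonal (fun i => (d i : ℂ)) * A * diagonal (fun i => (e i : ℂ)) * A) =
      ((∑ i, ∑ j, d i * e j * Complex.normSq (A i j) : ℝ) : ℂ) := by
  simp only [trace, diag_apply, mul_apply, diagonal_apply, mul_ite, ite_mul, zero_mul, mul_zero,
    Finset.sum_ite_eq, Finset.sum_ite_eq', Finset.mem_univ, if_true]
  push_cast
  refine Finset.sum_congr rfl fun i _ => Finset.sum_congr rfl fun j _ => ?_
  rw [← Complex.mul_conj, ← hA.apply j i, Complex.star_def]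
  ring

theorem trace_conj_mul_mul_conj_mul {U : Matrix m m ℂ} (hU : U ∈ unitary (Matrix m m ℂ))
    (D E C : Matrix m m ℂ) :
    trace ((U * D * star U) * C * (U * E * star U) * C) =
      trace (D * (star U * C * U) * E * (star U * C * U)) := by
  calc trace ((U * D * star U) * C * (U * E * star U) * C)
      = trace (U * (D * (star U * C * U) * E * (star U * C * U) * star U)) := by
        simp only [Matrix.mul_assoc, Unitary.mul_star_self_of_mem hU, Matrix.mul_one]
    _ = trace (D * (star U * C * U) * E * (star U * C * U)) := by
        rw [trace_mul_comm, Matrix.mul_assoc, Unitary.star_mul_self_of_mem hU, Matrix.mul_one]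

theorem conj_unitary_eq_zero_iff {U : Matrix m m ℂ} (hU : U ∈ unitary (Matrix m m ℂ))
    {C : Matrix m m ℂ} : star U * C * U = 0 ↔ C = 0 := by
  refine ⟨fun h => ?_, fun h => by simp [h]⟩
  calc C = U * (star U * C * U) * star U := by
        simp only [Matrix.mul_assoc, Unitary.mul_star_self_of_mem hU, Matrix.mul_one,
          ← Matrix.mul_assoc U, Matrix.one_mul]
    _ = 0 := by rw [h, Matrix.mul_zero, Matrix.zero_mul]

end Matrix

theorem sum_mul_normSq_eq_zero_iff {ι : Type*} [Fintype ι] {w : ι → ι → ℝ}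
    (hw : ∀ i j, 0 < w i j) {A : Matrix ι ι ℂ} :
    ∑ i, ∑ j, w i j * Complex.normSq (A i j) = 0 ↔ A = 0 := by
  have hterm : ∀ i j, 0 ≤ w i j * Complex.normSq (A i j) := fun i j =>
    mul_nonneg (hw i j).le (Complex.normSq_nonneg _)
  simp only [Finset.sum_eq_zero_iff_of_nonneg (fun i _ => Finset.sum_nonneg fun j _ => hterm i j),
    Finset.sum_eq_zero_iff_of_nonneg (fun j _ => hterm _ j), Finset.mem_univ, true_implies,
    mul_eq_zero, (hw _ _).ne', false_or, Complex.normSq_eq_zero, ← Matrix.ext_iff,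
    Matrix.zero_apply]

theorem continuous_rpow_mul_rpow_one_sub {a b : ℝ} (ha : 0 < a) (hb : 0 < b) :
    Continuous fun u : ℝ => a ^ u * b ^ (1 - u) := by
  fun_prop (disch := positivity)

theorem integral_rpow_mul_rpow_one_sub_pos {a b : ℝ} (ha : 0 < a) (hb : 0 < b) :
    0 < ∫ u in (0:ℝ)..1, a ^ u * b ^ (1 - u) :=
  intervalIntegral.intervalIntegral_pos_of_pos
    ((continuous_rpow_mul_rpow_one_sub ha hb).intervalIntegrable _ _) (fun u => by positivity)
    one_pos

section Bogoliubov

variable {ρ C : Matrix (Fin n) (Fin n) ℂ}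

theorem mpow_eq_of_isHermitian (hρ : ρ.IsHermitian) (u : ℝ) :
    mpow ρ u = (hρ.eigenvectorUnitary : Matrix (Fin n) (Fin n) ℂ) *
      Matrix.diagonal (fun i => ((hρ.eigenvalues i ^ u : ℝ) : ℂ)) *
      star (hρ.eigenvectorUnitary : Matrix (Fin n) (Fin n) ℂ) := by
  rw [mpow, hρ.cfc_eq, Matrix.IsHermitian.cfc]
  rfl

theorem trace_mpow_mul_mul_mpow_mul (hρ : ρ.IsHermitian) (hC : C.IsHermitian) (u v : ℝ) :
    Matrix.trace (mpow ρ u * C * mpow ρ v * C) =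
      ((∑ i, ∑ j, hρ.eigenvalues i ^ u * hρ.eigenvalues j ^ v *
        Complex.normSq ((star (hρ.eigenvectorUnitary : Matrix (Fin n) (Fin n) ℂ) * C *
          hρ.eigenvectorUnitary) i j) : ℝ) : ℂ) := by
  rw [mpow_eq_of_isHermitian hρ, mpow_eq_of_isHermitian hρ,
    Matrix.trace_conj_mul_mul_conj_mul hρ.eigenvectorUnitary.2]
  exact Matrix.trace_diagonal_mul_mul_diagonal_mul_of_isHermitian
    (Matrix.isHermitian_conjTranspose_mul_mul _ hC) _ _

theorem integral_trace_mpow_mul_mul_mpow_one_sub_mul (hρ : ρ.PosDef) (hC : C.IsHermitian) :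
    ∫ u in (0:ℝ)..1, Matrix.trace (mpow ρ u * C * mpow ρ (1 - u) * C) =
      ((∑ i, ∑ j, (∫ u in (0:ℝ)..1, hρ.1.eigenvalues i ^ u * hρ.1.eigenvalues j ^ (1 - u)) *
        Complex.normSq ((star (hρ.1.eigenvectorUnitary : Matrix (Fin n) (Fin n) ℂ) * C *
          hρ.1.eigenvectorUnitary) i j) : ℝ) : ℂ) := by
  have hcont : ∀ i j, Continuous fun u : ℝ =>
      hρ.1.eigenvalues i ^ u * hρ.1.eigenvalues j ^ (1 - u) := fun i j =>
    continuous_rpow_mul_rpow_one_sub (hρ.eigenvalues_pos i) (hρ.eigenvalues_pos j)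
  simp only [trace_mpow_mul_mul_mpow_mul hρ.1 hC, intervalIntegral.integral_ofReal]
  congr 1
  rw [intervalIntegral.integral_finsetSum fun i _ =>
    Continuous.intervalIntegrable (by fun_prop) _ _]
  refine Finset.sum_congr rfl fun i _ => ?_
  rw [intervalIntegral.integral_finsetSum fun j _ =>
    Continuous.intervalIntegrable (by fun_prop) _ _]
  exact Finset.sum_congr rfl fun j _ => intervalIntegral.integral_mul_const _ _

end Bogoliubov

theorem stmt12_general (n : ℕ) (ρ : Matrix (Fin n) (Fin n) ℂ) (hρ : ρ.PosDef)
    (C : Matrix (Fin n) (Fin n) ℂ) (hC : C.IsHermitian) :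
    (∫ u in (0:ℝ)..1, Matrix.trace (mpow ρ u * C * mpow ρ (1 - u) * C)).im = 0 ∧
    0 ≤ (∫ u in (0:ℝ)..1, Matrix.trace (mpow ρ u * C * mpow ρ (1 - u) * C)).re ∧
    ((∫ u in (0:ℝ)..1, Matrix.trace (mpow ρ u * C * mpow ρ (1 - u) * C)) = 0 ↔ C = 0) := by
  have hw : ∀ i j, 0 < ∫ u in (0:ℝ)..1, hρ.1.eigenvalues i ^ u * hρ.1.eigenvalues j ^ (1 - u) :=
    fun i j => integral_rpow_mul_rpow_one_sub_pos (hρ.eigenvalues_pos i) (hρ.eigenvalues_pos j)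
  rw [integral_trace_mpow_mul_mul_mpow_one_sub_mul hρ hC, Complex.ofReal_im, Complex.ofReal_re,
    Complex.ofReal_eq_zero, sum_mul_normSq_eq_zero_iff hw,
    Matrix.conj_unitary_eq_zero_iff hρ.1.eigenvectorUnitary.2]
  refine ⟨rfl, ?_, Iff.rfl⟩
  exact Finset.sum_nonneg fun i _ => Finset.sum_nonneg fun j _ =>
    mul_nonneg (hw i j).le (Complex.normSq_nonneg _)

/-- the Bogoliubov form `∫₀¹ Tr(ρ^u C ρ^(1-u) C) du` of a Hermitian matrix
`C` is a nonnegative real number, vanishing iff `C = 0`. -/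
theorem stmt12 (n : ℕ) (hn : 1 ≤ n) (ρ : Matrix (Fin n) (Fin n) ℂ) (hρ : ρ.PosDef)
    (C : Matrix (Fin n) (Fin n) ℂ) (hC : C.IsHermitian) :
    (∫ u in (0:ℝ)..1, Matrix.trace (mpow ρ u * C * mpow ρ (1 - u) * C)).im = 0 ∧
    0 ≤ (∫ u in (0:ℝ)..1, Matrix.trace (mpow ρ u * C * mpow ρ (1 - u) * C)).re ∧
    ((∫ u in (0:ℝ)..1, Matrix.trace (mpow ρ u * C * mpow ρ (1 - u) * C)) = 0 ↔ C = 0) :=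
  stmt12_general n ρ hρ C hC
end

section
/- Let ρ be a non-degenerate density matrix and A, B Hermitian n×n matrices, and define Φ_ρ(A) = log Tr exp(log ρ + A) and τ_A = exp(log ρ + A) / Tr exp(log ρ + A). Then Φ_ρ(B) ≥ Φ_ρ(A) + Tr( τ_A (B − A) ), i.e. the affine map B ↦ Φ_ρ(A) + Tr τ_A(B − A) is a supporting plane of the potential Φ_ρ touching it at A. -/
open MeasureTheory
open scoped ComplexOrder

attribute [local instance] Matrix.frobeniusNormedAddCommGroup Matrix.frobeniusNormedSpace

variable {n : ℕ}

/-!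
Put `H = log ρ + A` and `V = B - A`; after taking logarithms the claim is the Peierls–Bogoliubov
inequality `Tr e^H · exp (Tr (e^H V) / Tr e^H) ≤ Tr e^(H+V)`. Diagonalize `H = U diag(d) U*`.
Jensen's inequality for `exp` with the Gibbs weights `e^(d i) / Tr e^H` bounds the left side by
`∑ i, exp (d i + (U* V U) i i)`, and `d i + (U* V U) i i` are the diagonal entries of
`N = U* (H + V) U`. Peierls' inequality `∑ i, exp (N i i) ≤ Tr e^N` finishes the proof: the
diagonal of `N` is its eigenvalue vector multiplied by the doubly stochastic matrix `|W i j|²`,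
`W` a unitary diagonalizing `N`, so Jensen's inequality applies once more.
-/

open Matrix

lemma ConvexOn.sum_map_mulVec_le {ι : Type*} [Fintype ι] [DecidableEq ι] {s : Set ℝ} {f : ℝ → ℝ}
    (hf : ConvexOn ℝ s f) {S : Matrix ι ι ℝ} (hS : S ∈ doublyStochastic ℝ ι) {x : ι → ℝ}
    (hx : ∀ i, x i ∈ s) : ∑ i, f ((S *ᵥ x) i) ≤ ∑ i, f (x i) :=
  calc ∑ i, f ((S *ᵥ x) i)
      ≤ ∑ i, ∑ j, S i j * f (x j) := Finset.sum_le_sum fun i _ =>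
        hf.map_sum_le (fun j _ => nonneg_of_mem_doublyStochastic hS)
          (sum_row_of_mem_doublyStochastic hS i) fun j _ => hx j
    _ = ∑ j, f (x j) := by
        rw [Finset.sum_comm]
        simp only [← Finset.sum_mul, sum_col_of_mem_doublyStochastic hS, one_mul]

lemma Real.sum_exp_mul_exp_div_le_sum_exp_add {ι : Type*} [Fintype ι] [Nonempty ι]
    (d x : ι → ℝ) :
    (∑ i, Real.exp (d i)) * Real.exp ((∑ i, Real.exp (d i) * x i) / ∑ i, Real.exp (d i))
      ≤ ∑ i, Real.exp (d i + x i) := by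
  set Z := ∑ i, Real.exp (d i)
  have hZ : 0 < Z := Finset.sum_pos (fun i _ => Real.exp_pos _) Finset.univ_nonempty
  have jensen := convexOn_exp.map_sum_le (t := Finset.univ) (w := fun i => Real.exp (d i) / Z)
    (p := x) (fun i _ => by positivity) (by rw [← Finset.sum_div, div_self hZ.ne'])
    fun i _ => Set.mem_univ _
  simp only [smul_eq_mul, div_mul_eq_mul_div, ← Finset.sum_div] at jensen
  calc Z * Real.exp ((∑ i, Real.exp (d i) * x i) / Z)
      ≤ Z * ((∑ i, Real.exp (d i) * Real.exp (x i)) / Z) := by gcongr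
    _ = ∑ i, Real.exp (d i + x i) := by simp only [Real.exp_add]; field_simp

namespace Matrix

variable {ι : Type*} [Fintype ι] [DecidableEq ι]

lemma exp_unitary_conj (U : unitaryGroup ι ℂ) (X : Matrix ι ι ℂ) :
    NormedSpace.exp ((U : Matrix ι ι ℂ) * X * star (U : Matrix ι ι ℂ)) =
      U * NormedSpace.exp X * star (U : Matrix ι ι ℂ) := by
  have hinv : (U : Matrix ι ι ℂ)⁻¹ = star (U : Matrix ι ι ℂ) :=
    inv_eq_left_inv (mem_unitaryGroup_iff'.mp U.2)
  have hunit : IsUnit (U : Matrix ι ι ℂ) := ⟨Unitary.toUnits U, rfl⟩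
  rw [← hinv, exp_conj _ _ hunit]

lemma trace_exp_unitary_conj (U : unitaryGroup ι ℂ) (X : Matrix ι ι ℂ) :
    trace (NormedSpace.exp ((U : Matrix ι ι ℂ) * X * star (U : Matrix ι ι ℂ))) =
      trace (NormedSpace.exp X) := by
  rw [exp_unitary_conj, trace_mul_cycle, mem_unitaryGroup_iff'.mp U.2, one_mul]

lemma normSq_mem_doublyStochastic (U : unitaryGroup ι ℂ) :
    of (fun i j => Complex.normSq ((U : Matrix ι ι ℂ) i j)) ∈ doublyStochastic ℝ ι := by
  have row (i : ι) : ∑ j, Complex.normSq ((U : Matrix ι ι ℂ) i j) = 1 := by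
    have := congrFun₂ (mem_unitaryGroup_iff.mp U.2) i i
    simp only [mul_apply, star_apply, RCLike.star_def, Complex.mul_conj, one_apply_eq] at this
    exact_mod_cast this
  have col (j : ι) : ∑ i, Complex.normSq ((U : Matrix ι ι ℂ) i j) = 1 := by
    have := congrFun₂ (mem_unitaryGroup_iff'.mp U.2) j j
    simp only [mul_apply, star_apply, RCLike.star_def, mul_comm, Complex.mul_conj,
      one_apply_eq] at this
    exact_mod_cast this
  exact mem_doublyStochastic_iff_sum.mpr ⟨fun _ _ => Complex.normSq_nonneg _, row, col⟩

namespace IsHermitian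

variable {H : Matrix ι ι ℂ} (hH : H.IsHermitian)
include hH

lemma exp_eq :
    NormedSpace.exp H = (hH.eigenvectorUnitary : Matrix ι ι ℂ) *
      diagonal (fun i => (Real.exp (hH.eigenvalues i) : ℂ)) *
      star (hH.eigenvectorUnitary : Matrix ι ι ℂ) := by
  conv_lhs => rw [hH.spectral_theorem, Unitary.conjStarAlgAut_apply]
  rw [exp_unitary_conj, exp_diagonal]
  congr 3
  ext i
  simp [Complex.ofReal_exp, Complex.exp_eq_exp_ℂ]

lemma trace_exp :
    trace (NormedSpace.exp H) = ((∑ i, Real.exp (hH.eigenvalues i) : ℝ) : ℂ) := by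
  rw [exp_eq hH, trace_mul_cycle, mem_unitaryGroup_iff'.mp hH.eigenvectorUnitary.2, one_mul,
    trace_diagonal, Complex.ofReal_sum]

lemma re_diag_eq_mulVec_eigenvalues :
    (fun i => (H i i).re) =
      of (fun i j => Complex.normSq ((hH.eigenvectorUnitary : Matrix ι ι ℂ) i j)) *ᵥ
        hH.eigenvalues := by
  ext i
  conv_lhs => rw [hH.spectral_theorem, Unitary.conjStarAlgAut_apply]
  simp only [diagonal, Complex.coe_algebraMap, Function.comp_apply, mul_apply,
    eigenvectorUnitary_apply, of_apply, mul_ite, mul_zero, Finset.sum_ite_eq', Finset.mem_univ,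
    ↓reduceIte, star_apply, RCLike.star_def, Complex.re_sum, Complex.mul_re, Complex.ofReal_re,
    Complex.ofReal_im, sub_zero, Complex.conj_re, Complex.mul_im, zero_add, Complex.conj_im,
    mul_neg, sub_neg_eq_add, mulVec, dotProduct, Complex.normSq_apply]
  exact Finset.sum_congr rfl fun _ _ => by ring

lemma sum_exp_re_diag_le_re_trace_exp :
    ∑ i, Real.exp (H i i).re ≤ (trace (NormedSpace.exp H)).re := by
  have jensen := convexOn_exp.sum_map_mulVec_le
    (normSq_mem_doublyStochastic hH.eigenvectorUnitary) (x := hH.eigenvalues) fun _ => trivial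
  rw [← hH.re_diag_eq_mulVec_eigenvalues] at jensen
  rwa [hH.trace_exp, Complex.ofReal_re]

lemma re_trace_exp_mul_exp_le [Nonempty ι] {V : Matrix ι ι ℂ} (hV : V.IsHermitian) :
    (trace (NormedSpace.exp H)).re *
        Real.exp ((trace (NormedSpace.exp H * V)).re / (trace (NormedSpace.exp H)).re)
      ≤ (trace (NormedSpace.exp (H + V))).re := by
  set U : Matrix ι ι ℂ := (hH.eigenvectorUnitary : Matrix ι ι ℂ)
  set d := hH.eigenvalues
  set V' := star U * V * U
  have hdiagonalize : star U * H * U = diagonal (Complex.ofReal ∘ d) := by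
    simpa [Unitary.conjStarAlgAut_star_apply] using hH.conjStarAlgAut_star_eigenvectorUnitary
  set N := star U * (H + V) * U
  have hN : N.IsHermitian := by
    simp only [N, star_eq_conjTranspose]
    exact isHermitian_conjTranspose_mul_mul U (hH.add hV)
  have hN_diag (i : ι) : (N i i).re = d i + (V' i i).re := by
    simp [N, mul_add, add_mul, hdiagonalize, V']
  have hZ : (trace (NormedSpace.exp H)).re = ∑ i, Real.exp (d i) := by
    rw [hH.trace_exp, Complex.ofReal_re]
  have hS : (trace (NormedSpace.exp H * V)).re = ∑ i, Real.exp (d i) * (V' i i).re := by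
    rw [hH.exp_eq, mul_assoc, mul_assoc, trace_mul_comm, mul_assoc]
    simp only [trace, diag, diagonal_mul, Complex.re_sum, Complex.re_ofReal_mul, V', U, d]
  have hconj : trace (NormedSpace.exp N) = trace (NormedSpace.exp (H + V)) := by
    simpa [N] using trace_exp_unitary_conj (star hH.eigenvectorUnitary) (H + V)
  rw [hZ, hS, ← hconj]
  calc _ ≤ ∑ i, Real.exp (d i + (V' i i).re) := Real.sum_exp_mul_exp_div_le_sum_exp_add d _
    _ = ∑ i, Real.exp (N i i).re := by simp only [hN_diag]
    _ ≤ _ := hN.sum_exp_re_diag_le_re_trace_exp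

lemma le_log_re_trace_exp_add [Nonempty ι] {V : Matrix ι ι ℂ} (hV : V.IsHermitian) :
    Real.log (trace (NormedSpace.exp H)).re +
        (trace ((trace (NormedSpace.exp H))⁻¹ • NormedSpace.exp H * V)).re
      ≤ Real.log (trace (NormedSpace.exp (H + V))).re := by
  have hPB := hH.re_trace_exp_mul_exp_le hV
  set Z := ∑ i, Real.exp (hH.eigenvalues i)
  have hZ : 0 < Z := Finset.sum_pos (fun i _ => Real.exp_pos _) Finset.univ_nonempty
  rw [hH.trace_exp, Complex.ofReal_re] at hPB ⊢
  rw [smul_mul_assoc, trace_smul, ← Complex.ofReal_inv, smul_eq_mul, Complex.re_ofReal_mul,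
    inv_mul_eq_div]
  calc _ = Real.log (Z * Real.exp ((trace (NormedSpace.exp H * V)).re / Z)) := by
        rw [Real.log_mul hZ.ne' (Real.exp_pos _).ne', Real.log_exp]
    _ ≤ _ := Real.log_le_log (by positivity) hPB

end IsHermitian

end Matrix

theorem stmt15_general (n : ℕ) (hn : 1 ≤ n) (ρ : Matrix (Fin n) (Fin n) ℂ)
    (A B : Matrix (Fin n) (Fin n) ℂ) (hA : A.IsHermitian) (hB : B.IsHermitian) :
    potential ρ A + (Matrix.trace (tauOf ρ A * (B - A))).re ≤ potential ρ B := by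
  have : Nonempty (Fin n) := Fin.pos_iff_nonempty.mp hn
  have hH : (mlog ρ + A).IsHermitian := (cfc_predicate Real.log ρ).add hA
  have h := hH.le_log_re_trace_exp_add (hB.sub hA)
  rwa [add_add_sub_cancel] at h

/-- the affine map `B ↦ Φ_ρ(A) + Tr τ_A(B - A)` is a supporting plane of
the potential `Φ_ρ`: `Φ_ρ(B) ≥ Φ_ρ(A) + Tr(τ_A (B - A))`. -/
theorem stmt15 (n : ℕ) (hn : 1 ≤ n) (ρ : Matrix (Fin n) (Fin n) ℂ)
    (hρ : ρ.PosDef) (hρ1 : ρ.trace = 1)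
    (A B : Matrix (Fin n) (Fin n) ℂ) (hA : A.IsHermitian) (hB : B.IsHermitian) :
    potential ρ A + (Matrix.trace (tauOf ρ A * (B - A))).re ≤ potential ρ B :=
  stmt15_general n hn ρ A B hA hB
end

section
/- Let ρ be a non-degenerate density matrix. The potential Φ_ρ, defined by Φ_ρ(A) = log Tr exp(log ρ + A), is a convex function on the real vector space of Hermitian n×n matrices: for all Hermitian A, B and all t ∈ [0,1], Φ_ρ((1−t)A + tB) ≤ (1−t)Φ_ρ(A) + tΦ_ρ(B). -/
open MeasureTheory
open scoped ComplexOrder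

attribute [local instance] Matrix.frobeniusNormedAddCommGroup Matrix.frobeniusNormedSpace

variable {n : ℕ}

/-!
For a Hermitian `M` and a unit vector `v`, Jensen's inequality for the spectral decomposition
of `M` gives `exp ⟪v, M v⟫ ≤ ⟪v, exp M v⟫`; summing over the columns of a unitary `V` yields the
Peierls–Bogoliubov inequality `∑ᵢ exp (V⋆MV)ᵢᵢ ≤ Tr exp M`. If `V` diagonalizes `C = aM + bN`,
the eigenvalues of `C` are `a (V⋆MV)ᵢᵢ + b (V⋆NV)ᵢᵢ`, so Hölder's inequality for sums of
exponentials gives `Tr exp C ≤ (Tr exp M)^a (Tr exp N)^b`: `log Tr exp` is convex on Hermitian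
matrices, and `Φ_ρ` is its translate by `log ρ`.
-/

theorem Real.sum_exp_mul_add_mul_le {ι : Type*} (s : Finset ι) (x y : ι → ℝ) {a b : ℝ}
    (ha : 0 ≤ a) (hb : 0 ≤ b) (hab : a + b = 1) :
    ∑ i ∈ s, Real.exp (a * x i + b * y i)
      ≤ (∑ i ∈ s, Real.exp (x i)) ^ a * (∑ i ∈ s, Real.exp (y i)) ^ b := by
  rcases s.eq_empty_or_nonempty with rfl | hs
  · simp only [Finset.sum_empty]
    positivity
  set X := ∑ i ∈ s, Real.exp (x i)
  set Y := ∑ i ∈ s, Real.exp (y i)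
  have hX : 0 < X := Finset.sum_pos (fun i _ => Real.exp_pos _) hs
  have hY : 0 < Y := Finset.sum_pos (fun i _ => Real.exp_pos _) hs
  have hterm : ∀ i, Real.exp (a * x i + b * y i)
      = X ^ a * Y ^ b * ((Real.exp (x i) / X) ^ a * (Real.exp (y i) / Y) ^ b) := by
    intro i
    rw [Real.div_rpow (Real.exp_pos _).le hX.le, Real.div_rpow (Real.exp_pos _).le hY.le,
      ← Real.exp_mul, ← Real.exp_mul, Real.exp_add]
    field_simp
  calc ∑ i ∈ s, Real.exp (a * x i + b * y i)
      = X ^ a * Y ^ b * ∑ i ∈ s, (Real.exp (x i) / X) ^ a * (Real.exp (y i) / Y) ^ b := by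
        rw [Finset.mul_sum]
        exact Finset.sum_congr rfl fun i _ => hterm i
    _ ≤ X ^ a * Y ^ b * ∑ i ∈ s, (a * (Real.exp (x i) / X) + b * (Real.exp (y i) / Y)) := by
        gcongr with i
        exact Real.geom_mean_le_arith_mean2_weighted ha hb (by positivity) (by positivity) hab
    _ = X ^ a * Y ^ b := by
        rw [Finset.sum_add_distrib, ← Finset.mul_sum, ← Finset.mul_sum, ← Finset.sum_div,
          ← Finset.sum_div, div_self hX.ne', div_self hY.ne', mul_one, mul_one, hab, mul_one]

namespace Matrix.IsHermitian

open Unitary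

variable {𝕜 ι : Type*} [RCLike 𝕜] [Fintype ι] [DecidableEq ι] {M N : Matrix ι ι 𝕜}

theorem exp_eq_cfc (hM : M.IsHermitian) : NormedSpace.exp M = hM.cfc Real.exp := by
  have h := Matrix.exp_units_conj (toUnits hM.eigenvectorUnitary)
    (diagonal (RCLike.ofReal ∘ hM.eigenvalues))
  simp only [Unitary.val_toUnits_apply, Unitary.val_inv_toUnits_apply, ← Unitary.star_eq_inv,
    Unitary.coe_star] at h
  conv_lhs => rw [hM.spectral_theorem]
  rw [IsHermitian.cfc, conjStarAlgAut_apply, conjStarAlgAut_apply, h, exp_diagonal]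
  congr 3
  funext i
  simp [Real.exp_eq_exp_ℝ, ← NormedSpace.algebraMap_exp_comm]

theorem trace_cfc (hM : M.IsHermitian) (f : ℝ → ℝ) :
    (hM.cfc f).trace = ∑ i, (f (hM.eigenvalues i) : 𝕜) := by
  rw [IsHermitian.cfc, conjStarAlgAut_apply, trace_mul_cycle, coe_star_mul_self, one_mul,
    trace_diagonal]
  rfl

theorem re_trace_exp (hM : M.IsHermitian) :
    RCLike.re (NormedSpace.exp M).trace = ∑ i, Real.exp (hM.eigenvalues i) := by
  rw [hM.exp_eq_cfc, trace_cfc, map_sum]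
  simp only [RCLike.ofReal_re]

theorem dotProduct_cfc_mulVec (hM : M.IsHermitian) (f : ℝ → ℝ) (v : ι → 𝕜) :
    star v ⬝ᵥ (hM.cfc f *ᵥ v) = ((∑ j, f (hM.eigenvalues j) *
      ‖(star (hM.eigenvectorUnitary : Matrix ι ι 𝕜) *ᵥ v) j‖ ^ 2 : ℝ) : 𝕜) := by
  set U := (hM.eigenvectorUnitary : Matrix ι ι 𝕜)
  have hconj : star v ⬝ᵥ (hM.cfc f *ᵥ v) = star (star U *ᵥ v) ⬝ᵥ
      (diagonal (RCLike.ofReal ∘ f ∘ hM.eigenvalues) *ᵥ (star U *ᵥ v)) := by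
    rw [IsHermitian.cfc, conjStarAlgAut_apply, ← mulVec_mulVec, ← mulVec_mulVec,
      dotProduct_mulVec, star_mulVec]
    simp [U, star_eq_conjTranspose]
  rw [hconj]
  simp only [dotProduct, mulVec_diagonal, Pi.star_apply, RCLike.star_def, Function.comp_apply]
  push_cast
  refine Finset.sum_congr rfl fun j _ => ?_
  rw [mul_left_comm, RCLike.conj_mul]

theorem exp_re_dotProduct_mulVec_le (hM : M.IsHermitian) {v : ι → 𝕜} (hv : star v ⬝ᵥ v = 1) :
    Real.exp (RCLike.re (star v ⬝ᵥ (M *ᵥ v)))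
      ≤ RCLike.re (star v ⬝ᵥ (NormedSpace.exp M *ᵥ v)) := by
  set w := star (hM.eigenvectorUnitary : Matrix ι ι 𝕜) *ᵥ v
  have hw : ∑ j, ‖w j‖ ^ 2 = 1 := by
    have h := hM.dotProduct_cfc_mulVec 1 v
    rw [← hM.cfc_eq, cfc_one ℝ M, one_mulVec, hv] at h
    exact_mod_cast (by simpa using h.symm : ((∑ j, ‖w j‖ ^ 2 : ℝ) : 𝕜) = 1)
  have hid : M = hM.cfc id := by rw [← hM.cfc_eq, cfc_id ℝ M hM.isSelfAdjoint]
  conv_lhs => rw [hid]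
  rw [hM.exp_eq_cfc, dotProduct_cfc_mulVec, dotProduct_cfc_mulVec, RCLike.ofReal_re,
    RCLike.ofReal_re]
  simpa only [smul_eq_mul, mul_comm, id] using convexOn_exp.map_sum_le (t := Finset.univ)
    (fun j _ => sq_nonneg ‖w j‖) hw (fun j _ => Set.mem_univ (hM.eigenvalues j))

theorem sum_exp_re_diag_conj_le (hM : M.IsHermitian) {V : Matrix ι ι 𝕜}
    (hV : V ∈ unitaryGroup ι 𝕜) :
    ∑ i, Real.exp (RCLike.re ((star V * M * V) i i)) ≤ RCLike.re (NormedSpace.exp M).trace := by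
  have hrow : ∀ i, (star V) i = star (Vᵀ i) := fun i => rfl
  calc ∑ i, Real.exp (RCLike.re ((star V * M * V) i i))
      ≤ ∑ i, RCLike.re ((star V * NormedSpace.exp M * V) i i) := by
        refine Finset.sum_le_sum fun i _ => ?_
        have hunit : star (Vᵀ i) ⬝ᵥ Vᵀ i = 1 := by
          have h := congrFun (congrFun ((mem_unitaryGroup_iff').mp hV) i) i
          rwa [mul_apply', one_apply_eq, hrow] at h
        rw [mul_mul_apply, mul_mul_apply, hrow]
        exact hM.exp_re_dotProduct_mulVec_le hunit
    _ = RCLike.re (star V * NormedSpace.exp M * V).trace := by simp [trace]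
    _ = RCLike.re (NormedSpace.exp M).trace := by
        rw [trace_mul_cycle, (mem_unitaryGroup_iff).mp hV, one_mul]

theorem eigenvalues_smul_add_smul {a b : ℝ} (hC : (a • M + b • N).IsHermitian) (i : ι) :
    hC.eigenvalues i
      = a * RCLike.re ((star hC.eigenvectorUnitary.1 * M * hC.eigenvectorUnitary.1) i i)
        + b * RCLike.re ((star hC.eigenvectorUnitary.1 * N * hC.eigenvectorUnitary.1) i i) := by
  have h := congrFun (congrFun hC.conjStarAlgAut_star_eigenvectorUnitary i) i
  rw [conjStarAlgAut_star_apply] at h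
  simp only [add_mul, mul_add, add_apply, diagonal_apply_eq, Function.comp_apply] at h
  simpa [RCLike.smul_re] using (congrArg RCLike.re h).symm

theorem re_trace_exp_smul_add_smul_le (hM : M.IsHermitian) (hN : N.IsHermitian) {a b : ℝ}
    (ha : 0 ≤ a) (hb : 0 ≤ b) (hab : a + b = 1) :
    RCLike.re (NormedSpace.exp (a • M + b • N)).trace
      ≤ RCLike.re (NormedSpace.exp M).trace ^ a * RCLike.re (NormedSpace.exp N).trace ^ b := by
  have hC : (a • M + b • N).IsHermitian :=
    (hM.smul (IsSelfAdjoint.all a)).add (hN.smul (IsSelfAdjoint.all b))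
  set V := (hC.eigenvectorUnitary : Matrix ι ι 𝕜)
  have hMle := hM.sum_exp_re_diag_conj_le hC.eigenvectorUnitary.2
  have hNle := hN.sum_exp_re_diag_conj_le hC.eigenvectorUnitary.2
  calc RCLike.re (NormedSpace.exp (a • M + b • N)).trace
      = ∑ i, Real.exp (a * RCLike.re ((star V * M * V) i i)
          + b * RCLike.re ((star V * N * V) i i)) := by
        rw [hC.re_trace_exp]
        exact Finset.sum_congr rfl fun i _ => by rw [eigenvalues_smul_add_smul]
    _ ≤ (∑ i, Real.exp (RCLike.re ((star V * M * V) i i))) ^ a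
          * (∑ i, Real.exp (RCLike.re ((star V * N * V) i i))) ^ b :=
        Real.sum_exp_mul_add_mul_le _ _ _ ha hb hab
    _ ≤ _ :=
        mul_le_mul (Real.rpow_le_rpow (by positivity) hMle ha)
          (Real.rpow_le_rpow (by positivity) hNle hb) (by positivity)
          (Real.rpow_nonneg ((Finset.sum_nonneg fun i _ => (Real.exp_pos _).le).trans hMle) a)

end Matrix.IsHermitian

open Matrix in
theorem convexOn_log_re_trace_exp {𝕜 ι : Type*} [RCLike 𝕜] [Fintype ι] [DecidableEq ι] :
    ConvexOn ℝ {M : Matrix ι ι 𝕜 | M.IsHermitian}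
      fun M => Real.log (RCLike.re (NormedSpace.exp M).trace) := by
  refine ⟨(selfAdjoint.submodule ℝ (Matrix ι ι 𝕜)).convex, fun M hM N hN a b ha hb hab => ?_⟩
  rcases isEmpty_or_nonempty ι with hι | hι
  · simp [trace_eq_zero_of_isEmpty]
  have hpos : ∀ {M : Matrix ι ι 𝕜}, M.IsHermitian → 0 < RCLike.re (NormedSpace.exp M).trace :=
    fun hM => hM.re_trace_exp ▸ Finset.sum_pos (fun i _ => Real.exp_pos _) Finset.univ_nonempty
  have hC : (a • M + b • N).IsHermitian :=
    (IsHermitian.smul hM (IsSelfAdjoint.all a)).add (IsHermitian.smul hN (IsSelfAdjoint.all b))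
  calc Real.log (RCLike.re (NormedSpace.exp (a • M + b • N)).trace)
      ≤ Real.log (RCLike.re (NormedSpace.exp M).trace ^ a
          * RCLike.re (NormedSpace.exp N).trace ^ b) :=
        Real.log_le_log (hpos hC) (IsHermitian.re_trace_exp_smul_add_smul_le hM hN ha hb hab)
    _ = _ := by
        rw [Real.log_mul (Real.rpow_pos_of_pos (hpos hM) a).ne'
            (Real.rpow_pos_of_pos (hpos hN) b).ne',
          Real.log_rpow (hpos hM), Real.log_rpow (hpos hN), smul_eq_mul, smul_eq_mul]

theorem stmt16_general (n : ℕ) (ρ : Matrix (Fin n) (Fin n) ℂ)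
    (A B : Matrix (Fin n) (Fin n) ℂ) (hA : A.IsHermitian) (hB : B.IsHermitian)
    (t : ℝ) (ht0 : 0 ≤ t) (ht1 : t ≤ 1) :
    potential ρ ((1 - t) • A + t • B)
      ≤ (1 - t) * potential ρ A + t * potential ρ B := by
  have hL : (mlog ρ).IsHermitian := cfc_predicate _ _
  have h := convexOn_log_re_trace_exp.2 (hL.add hA) (hL.add hB) (sub_nonneg.2 ht1) ht0 (by ring)
  have hsplit : mlog ρ + ((1 - t) • A + t • B) = (1 - t) • (mlog ρ + A) + t • (mlog ρ + B) := by
    module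
  simpa only [potential, mexp, hsplit, smul_eq_mul, RCLike.re_to_complex] using h

/-- the potential `Φ_ρ` is convex on the real vector space of Hermitian
matrices. -/
theorem stmt16 (n : ℕ) (hn : 1 ≤ n) (ρ : Matrix (Fin n) (Fin n) ℂ)
    (hρ : ρ.PosDef) (hρ1 : ρ.trace = 1)
    (A B : Matrix (Fin n) (Fin n) ℂ) (hA : A.IsHermitian) (hB : B.IsHermitian)
    (t : ℝ) (ht0 : 0 ≤ t) (ht1 : t ≤ 1) :
    potential ρ ((1 - t) • A + t • B)
      ≤ (1 - t) * potential ρ A + t * potential ρ B :=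
  stmt16_general n ρ A B hA hB t ht0 ht1
end
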